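/- Let Λ = ℤ ⊕ ℤτ ⊂ ℂ be a lattice with Im τ > 0, let ψ be a nontrivial character of Λ, and let k : [1,∞) → ℂ be continuous with |k(t)| ≤ C t^{−4} for some constant C and all t ≥ 1. Then lim_{A→∞} Σ_{μ∈Λ, μ≠0} ψ(μ) · ∫₀^A k( 1 + |μ|²/(2r²) ) · r^{−3} dr = L(Λ,ψ) · ∫₀^∞ k(1+u) du, where for each A > 0 the sum over μ converges absolutely. -/

import Mathlib

/-- `Z(x, Λ, ψ) = ∑_{0 ≠ μ ∈ Λ, |μ|² ≤ x} ψ(μ)/|μ|²` for the lattice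
`Λ = ℤ ⊕ ℤτ`, where the lattice point indexed by `(m, n) ∈ ℤ × ℤ` is `mτ + n`. -/
noncomputable def latticeZ (τ : ℂ) (ψ : ℤ × ℤ → ℂ) (x : ℝ) : ℂ :=
  ∑' mn : ℤ × ℤ,
    if mn ≠ 0 ∧ ‖(mn.1 : ℂ) * τ + (mn.2 : ℂ)‖ ^ 2 ≤ x then
      ψ mn / ((‖(mn.1 : ℂ) * τ + (mn.2 : ℂ)‖ ^ 2 : ℝ) : ℂ)
    else 0

/-!
The substitution `u = |μ|² / (2r²)` turns the `μ`-th term into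
`ψ(μ) |μ|⁻² ∫_{|μ|²/(2A²)}^∞ k(1 + u) du`, which is `O(A⁶ |μ|⁻⁸)` by the decay of `k`. Hence the
sum converges absolutely and can be interchanged with the integral:
`∑_μ (…) = ∫₀^∞ Z(2A²u, Λ, ψ) k(1 + u) du`.
Since `Z(·, Λ, ψ)` converges, it is bounded, and dominated convergence gives the limit as
`A → ∞`.
-/

open Set Filter MeasureTheory Topology

noncomputable def latticeNormSq (τ : ℂ) (mn : ℤ × ℤ) : ℝ :=
  ‖(mn.1 : ℂ) * τ + (mn.2 : ℂ)‖ ^ 2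

lemma latticeNormSq_pos {τ : ℂ} (hτ : 0 < τ.im) {mn : ℤ × ℤ} (hmn : mn ≠ 0) :
    0 < latticeNormSq τ mn := by
  refine pow_pos (norm_pos_iff.2 fun h => hmn ?_) 2
  have him : (mn.1 : ℝ) * τ.im = 0 := by simpa using congrArg Complex.im h
  have hm : mn.1 = 0 := by exact_mod_cast (mul_eq_zero.1 him).resolve_right hτ.ne'
  have hn : (mn.2 : ℂ) = 0 := by simpa [hm] using h
  exact Prod.ext hm (by exact_mod_cast hn)

-- The term at `mn = 0` is `0⁻¹ ^ n = 0`.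
lemma summable_inv_latticeNormSq_pow {τ : ℂ} (hτ : 0 < τ.im) {n : ℕ} (hn : 1 < n) :
    Summable fun mn : ℤ × ℤ => (latticeNormSq τ mn)⁻¹ ^ n := by
  set r := EisensteinSeries.r ⟨τ, hτ⟩
  have hr : 0 < r := EisensteinSeries.r_pos _
  have hnorm : Summable fun mn : ℤ × ℤ => ‖![mn.1, mn.2]‖ ^ (-(2 * n : ℝ)) := by
    have h2n : (2 : ℝ) < 2 * n := by
      have : (1 : ℝ) < n := by exact_mod_cast hn
      linarith
    exact (finTwoArrowEquiv ℤ).symm.summable_iff.2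
      (EisensteinSeries.summable_one_div_norm_rpow h2n)
  refine Summable.of_nonneg_of_le (fun mn => by unfold latticeNormSq; positivity)
    (fun mn => ?_) (hnorm.mul_left ((r ^ 2)⁻¹ ^ n))
  rcases eq_or_ne mn 0 with rfl | hmn
  · rw [show latticeNormSq τ 0 = 0 by simp [latticeNormSq], inv_zero, zero_pow (by omega)]
    positivity
  have hv : ![mn.1, mn.2] ≠ 0 := fun h => hmn (Prod.ext (congrFun h 0) (congrFun h 1))
  have hle : r * ‖![mn.1, mn.2]‖ ≤ ‖(mn.1 : ℂ) * τ + mn.2‖ := by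
    simpa using EisensteinSeries.r_mul_max_le ⟨τ, hτ⟩ hv
  calc (latticeNormSq τ mn)⁻¹ ^ n ≤ ((r * ‖![mn.1, mn.2]‖) ^ 2)⁻¹ ^ n := by
        unfold latticeNormSq; gcongr
    _ = (r ^ 2)⁻¹ ^ n * ‖![mn.1, mn.2]‖ ^ (-(2 * n : ℝ)) := by
        rw [Real.rpow_neg (norm_nonneg _), Real.rpow_mul_natCast (norm_nonneg _), Real.rpow_two]
        ring

noncomputable def latticeZTerm (τ : ℂ) (ψ : ℤ × ℤ → ℂ) (x : ℝ) (mn : ℤ × ℤ) : ℂ :=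
  if mn ≠ 0 ∧ latticeNormSq τ mn ≤ x then ψ mn / (latticeNormSq τ mn : ℂ) else 0

lemma latticeZ_eq_tsum (τ : ℂ) (ψ : ℤ × ℤ → ℂ) (x : ℝ) :
    latticeZ τ ψ x = ∑' mn, latticeZTerm τ ψ x mn := rfl

lemma norm_latticeZTerm_le {τ : ℂ} {ψ : ℤ × ℤ → ℂ} (hψ : ∀ a, ‖ψ a‖ ≤ 1) {x y : ℝ} (hxy : x ≤ y)
    (mn : ℤ × ℤ) : ‖latticeZTerm τ ψ x mn‖ ≤ |y| ^ 3 * (latticeNormSq τ mn)⁻¹ ^ 4 := by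
  have hQ : 0 ≤ latticeNormSq τ mn := by unfold latticeNormSq; positivity
  unfold latticeZTerm
  split_ifs with h
  · rw [norm_div, Complex.norm_real, Real.norm_of_nonneg hQ]
    calc ‖ψ mn‖ / latticeNormSq τ mn ≤ (latticeNormSq τ mn)⁻¹ := by
          rw [div_eq_mul_inv]
          exact mul_le_of_le_one_left (inv_nonneg.2 hQ) (hψ mn)
      _ = latticeNormSq τ mn ^ 3 * (latticeNormSq τ mn)⁻¹ ^ 4 := by
          rcases hQ.eq_or_lt with h0 | h0
          · simp [← h0]
          · field_simp
      _ ≤ |y| ^ 3 * (latticeNormSq τ mn)⁻¹ ^ 4 := by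
          gcongr
          exact h.2.trans (hxy.trans (le_abs_self y))
  · rw [norm_zero]
    positivity

lemma summable_latticeZTerm {τ : ℂ} (hτ : 0 < τ.im) {ψ : ℤ × ℤ → ℂ} (hψ : ∀ a, ‖ψ a‖ ≤ 1)
    (x : ℝ) : Summable (latticeZTerm τ ψ x) :=
  .of_norm_bounded ((summable_inv_latticeNormSq_pow hτ (by norm_num)).mul_left _)
    (norm_latticeZTerm_le hψ le_rfl)

lemma norm_latticeZ_le {τ : ℂ} (hτ : 0 < τ.im) {ψ : ℤ × ℤ → ℂ} (hψ : ∀ a, ‖ψ a‖ ≤ 1)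
    {x y : ℝ} (hxy : x ≤ y) :
    ‖latticeZ τ ψ x‖ ≤ |y| ^ 3 * ∑' mn, (latticeNormSq τ mn)⁻¹ ^ 4 :=
  tsum_of_norm_bounded ((summable_inv_latticeNormSq_pow hτ (by norm_num)).hasSum.mul_left _)
    (norm_latticeZTerm_le hψ hxy)

lemma exists_norm_latticeZ_le {τ : ℂ} (hτ : 0 < τ.im) {ψ : ℤ × ℤ → ℂ} (hψ : ∀ a, ‖ψ a‖ ≤ 1)
    {L : ℂ} (hL : Tendsto (latticeZ τ ψ) atTop (𝓝 L)) : ∃ B, ∀ x, ‖latticeZ τ ψ x‖ ≤ B := by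
  obtain ⟨x₀, hx₀⟩ := eventually_atTop.1 (hL.norm.eventually (gt_mem_nhds (lt_add_one ‖L‖)))
  refine ⟨max (‖L‖ + 1) (|x₀| ^ 3 * ∑' mn, (latticeNormSq τ mn)⁻¹ ^ 4), fun x => ?_⟩
  rcases le_total x₀ x with h | h
  · exact le_max_of_le_left (hx₀ x h).le
  · exact le_max_of_le_right (norm_latticeZ_le hτ hψ h)

lemma MeasureTheory.StronglyMeasurable.tsum_of_summable {α ι E : Type*} [MeasurableSpace α]
    [Countable ι] [AddCommMonoid E] [TopologicalSpace E] [ContinuousAdd E]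
    [TopologicalSpace.PseudoMetrizableSpace E]
    {f : ι → α → E} (hf : ∀ i, StronglyMeasurable (f i)) (hs : ∀ x, Summable fun i => f i x) :
    StronglyMeasurable fun x => ∑' i, f i x :=
  stronglyMeasurable_of_tendsto atTop (fun s => Finset.stronglyMeasurable_sum s fun i _ => hf i)
    (tendsto_pi_nhds.2 fun x => by simp only [Finset.sum_apply]; exact (hs x).hasSum)

lemma stronglyMeasurable_latticeZ {τ : ℂ} (hτ : 0 < τ.im) {ψ : ℤ × ℤ → ℂ}
    (hψ : ∀ a, ‖ψ a‖ ≤ 1) : StronglyMeasurable (latticeZ τ ψ) :=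
  .tsum_of_summable (fun _ => .ite ((MeasurableSet.const _).inter measurableSet_Ici)
    stronglyMeasurable_const stronglyMeasurable_const) (summable_latticeZTerm hτ hψ)

section Kernel

variable {E : Type*} [NormedAddCommGroup E] {k : ℝ → E} {C : ℝ}

lemma integrableOn_Ioi_comp_one_add (hk : ContinuousOn k (Ici 1))
    (hbound : ∀ t : ℝ, 1 ≤ t → ‖k t‖ ≤ C / t ^ 4) :
    IntegrableOn (fun u => k (1 + u)) (Ioi 0) := by
  have hcont : ContinuousOn (fun u => k (1 + u)) (Ioi 0) :=
    hk.comp (continuous_const_add 1).continuousOn fun u hu => by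
      simp only [mem_Ici]; linarith [mem_Ioi.1 hu]
  refine Integrable.mono'
    ((integrable_one_add_norm (E := ℝ) (r := 4) (by norm_num)).integrableOn.const_mul C)
    (hcont.aestronglyMeasurable measurableSet_Ioi) ?_
  filter_upwards [ae_restrict_mem measurableSet_Ioi] with u (hu : 0 < u)
  rw [Real.norm_of_nonneg hu.le, Real.rpow_neg (by positivity), Real.rpow_ofNat, ← div_eq_mul_inv]
  exact hbound _ (by linarith)

lemma integral_Ici_norm_comp_one_add_le (hbound : ∀ t : ℝ, 1 ≤ t → ‖k t‖ ≤ C / t ^ 4) {a : ℝ}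
    (ha : 0 < a) : ∫ u in Ici a, ‖k (1 + u)‖ ≤ C / (3 * a ^ 3) := by
  have hC : 0 ≤ C := by simpa using (norm_nonneg _).trans (hbound 1 le_rfl)
  rw [integral_Ici_eq_integral_Ioi]
  calc ∫ u in Ioi a, ‖k (1 + u)‖ ≤ ∫ u in Ioi a, C * u ^ (-4 : ℝ) := by
        refine integral_mono_of_nonneg (ae_of_all _ fun _ => norm_nonneg _)
          ((integrableOn_Ioi_rpow_of_lt (by norm_num) ha).const_mul C) ?_
        filter_upwards [ae_restrict_mem measurableSet_Ioi] with u hu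
        have hu : 0 < u := ha.trans hu
        rw [Real.rpow_neg hu.le, Real.rpow_ofNat, ← div_eq_mul_inv]
        exact (hbound _ (by linarith)).trans (by gcongr; linarith)
    _ = C / (3 * a ^ 3) := by
        rw [integral_const_mul, integral_Ioi_rpow_of_lt (by norm_num) ha]
        norm_num
        ring

end Kernel

lemma image_div_two_mul_sq_Ioc {q A : ℝ} (hq : 0 < q) (hA : 0 < A) :
    (fun r => q / (2 * r ^ 2)) '' Ioc 0 A = Ici (q / (2 * A ^ 2)) := by
  ext u
  constructor
  · rintro ⟨r, ⟨hr, hrA⟩, rfl⟩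
    exact div_le_div_of_nonneg_left hq.le (by positivity) (by gcongr)
  · intro hu
    have hu0 : 0 < u := lt_of_lt_of_le (by positivity) hu
    refine ⟨√(q / (2 * u)), ⟨Real.sqrt_pos.2 (by positivity), ?_⟩, ?_⟩
    · rw [Real.sqrt_le_left hA.le, div_le_iff₀ (by positivity)]
      rw [mem_Ici, div_le_iff₀ (by positivity)] at hu
      linarith
    · simp only
      rw [Real.sq_sqrt (by positivity)]
      field_simp

lemma setIntegral_Ioc_smul_comp_div_two_mul_sq {E : Type*} [NormedAddCommGroup E]
    [NormedSpace ℝ E] (g : ℝ → E) {q A : ℝ} (hq : 0 < q) (hA : 0 < A) :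
    ∫ r in Ioc 0 A, (r ^ 3)⁻¹ • g (q / (2 * r ^ 2)) = q⁻¹ • ∫ u in Ici (q / (2 * A ^ 2)), g u := by
  have hderiv : ∀ r ∈ Ioc 0 A,
      HasDerivWithinAt (fun r => q / (2 * r ^ 2)) (-(q / r ^ 3)) (Ioc 0 A) r := by
    intro r hr
    have h := (((hasDerivAt_pow 2 r).const_mul 2).inv (by positivity [hr.1])).const_mul q
    have hf : (fun r : ℝ => q / (2 * r ^ 2)) = fun r => q * (fun r => 2 * r ^ 2)⁻¹ r := by
      ext r; simp [div_eq_mul_inv]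
    rw [hf]
    refine h.hasDerivWithinAt.congr_deriv ?_
    have := hr.1.ne'
    field_simp
    ring
  have hinj : InjOn (fun r => q / (2 * r ^ 2)) (Ioc 0 A) := by
    refine StrictAntiOn.injOn fun r hr s _ hrs => ?_
    exact div_lt_div_of_pos_left hq (by positivity [hr.1]) (by gcongr; exact hr.1.le)
  rw [← image_div_two_mul_sq_Ioc hq hA,
    integral_image_eq_integral_abs_deriv_smul measurableSet_Ioc hderiv hinj, ← integral_smul]
  refine setIntegral_congr_fun measurableSet_Ioc fun r hr => ?_
  have hr0 : 0 < r := hr.1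
  rw [smul_smul, abs_neg, abs_of_pos (by positivity)]
  congr 1
  field_simp

noncomputable def parabolicTerm (τ : ℂ) (ψ : ℤ × ℤ → ℂ) (k : ℝ → ℂ) (A : ℝ) (mn : ℤ × ℤ) : ℂ :=
  if mn = 0 then 0 else
    ψ mn * ∫ r in Ioc 0 A, k (1 + latticeNormSq τ mn / (2 * r ^ 2)) / (r : ℂ) ^ 3

section ParabolicTerm

variable {τ : ℂ} {ψ : ℤ × ℤ → ℂ} {k : ℝ → ℂ} {C : ℝ}

lemma latticeZTerm_mul_eq_indicator {c : ℝ} (hc : 0 < c) {mn : ℤ × ℤ} (hmn : mn ≠ 0)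
    (g : ℝ → ℂ) (u : ℝ) :
    latticeZTerm τ ψ (c * u) mn * g u =
      (Ici (latticeNormSq τ mn / c)).indicator
        (fun u => ψ mn / (latticeNormSq τ mn : ℂ) * g u) u := by
  simp only [latticeZTerm, indicator, mem_Ici, div_le_iff₀' hc, ne_eq, hmn, not_false_eq_true,
    true_and]
  exact ite_zero_mul ..

lemma parabolicTerm_eq_integral (hτ : 0 < τ.im) {A : ℝ} (hA : 0 < A) (mn : ℤ × ℤ) :
    parabolicTerm τ ψ k A mn = ∫ u in Ioi 0, latticeZTerm τ ψ (2 * A ^ 2 * u) mn * k (1 + u) := by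
  rcases eq_or_ne mn 0 with rfl | hmn
  · simp [parabolicTerm, latticeZTerm]
  have hQ := latticeNormSq_pos hτ hmn
  have hsubst := setIntegral_Ioc_smul_comp_div_two_mul_sq (fun u => k (1 + u)) hQ hA
  simp only [Complex.real_smul, Complex.ofReal_inv, Complex.ofReal_pow] at hsubst
  simp_rw [latticeZTerm_mul_eq_indicator (by positivity : 0 < 2 * A ^ 2) hmn (fun u => k (1 + u))]
  rw [setIntegral_indicator measurableSet_Ici, inter_eq_right.2 (Ici_subset_Ioi.2 (by positivity)),
    integral_const_mul, parabolicTerm, if_neg hmn]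
  simp_rw [div_eq_inv_mul (k _), hsubst]
  ring

lemma integrableOn_latticeZTerm_mul (hk : ContinuousOn k (Ici 1))
    (hbound : ∀ t : ℝ, 1 ≤ t → ‖k t‖ ≤ C / t ^ 4) {c : ℝ} (hc : 0 < c) (mn : ℤ × ℤ) :
    IntegrableOn (fun u => latticeZTerm τ ψ (c * u) mn * k (1 + u)) (Ioi 0) := by
  rcases eq_or_ne mn 0 with rfl | hmn
  · simp [latticeZTerm]
  simp_rw [latticeZTerm_mul_eq_indicator hc hmn (fun u => k (1 + u))]
  exact ((integrableOn_Ioi_comp_one_add hk hbound).const_mul _).indicator measurableSet_Ici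

lemma integral_norm_latticeZTerm_mul_le (hτ : 0 < τ.im) (hψ : ∀ a, ‖ψ a‖ ≤ 1)
    (hbound : ∀ t : ℝ, 1 ≤ t → ‖k t‖ ≤ C / t ^ 4) {c : ℝ} (hc : 0 < c) (mn : ℤ × ℤ) :
    ∫ u in Ioi 0, ‖latticeZTerm τ ψ (c * u) mn * k (1 + u)‖ ≤
      C * c ^ 3 / 3 * (latticeNormSq τ mn)⁻¹ ^ 4 := by
  rcases eq_or_ne mn 0 with rfl | hmn
  · simp [latticeZTerm, latticeNormSq]
  have hQ := latticeNormSq_pos hτ hmn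
  simp_rw [latticeZTerm_mul_eq_indicator hc hmn (fun u => k (1 + u)),
    norm_indicator_eq_indicator_norm]
  rw [setIntegral_indicator measurableSet_Ici, inter_eq_right.2 (Ici_subset_Ioi.2 (by positivity))]
  simp_rw [norm_mul, norm_div, Complex.norm_real, Real.norm_of_nonneg hQ.le]
  rw [integral_const_mul]
  calc ‖ψ mn‖ / latticeNormSq τ mn * ∫ u in Ici (latticeNormSq τ mn / c), ‖k (1 + u)‖
      ≤ (latticeNormSq τ mn)⁻¹ * (C / (3 * (latticeNormSq τ mn / c) ^ 3)) := by
        refine mul_le_mul ?_ (integral_Ici_norm_comp_one_add_le hbound (by positivity))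
          (setIntegral_nonneg measurableSet_Ici fun _ _ => norm_nonneg _) (by positivity)
        rw [div_eq_mul_inv]
        exact mul_le_of_le_one_left (by positivity) (hψ mn)
    _ = C * c ^ 3 / 3 * (latticeNormSq τ mn)⁻¹ ^ 4 := by
        field_simp

lemma summable_integral_norm_latticeZTerm_mul (hτ : 0 < τ.im) (hψ : ∀ a, ‖ψ a‖ ≤ 1)
    (hbound : ∀ t : ℝ, 1 ≤ t → ‖k t‖ ≤ C / t ^ 4) {c : ℝ} (hc : 0 < c) :
    Summable fun mn => ∫ u in Ioi 0, ‖latticeZTerm τ ψ (c * u) mn * k (1 + u)‖ :=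
  .of_nonneg_of_le (fun _ => integral_nonneg fun _ => norm_nonneg _)
    (integral_norm_latticeZTerm_mul_le hτ hψ hbound hc)
    ((summable_inv_latticeNormSq_pow hτ (by norm_num)).mul_left _)

lemma summable_norm_parabolicTerm (hτ : 0 < τ.im) (hψ : ∀ a, ‖ψ a‖ ≤ 1)
    (hbound : ∀ t : ℝ, 1 ≤ t → ‖k t‖ ≤ C / t ^ 4) {A : ℝ} (hA : 0 < A) :
    Summable fun mn => ‖parabolicTerm τ ψ k A mn‖ :=
  (summable_integral_norm_latticeZTerm_mul hτ hψ hbound (c := 2 * A ^ 2)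
    (by positivity)).of_nonneg_of_le (fun _ => norm_nonneg _) fun mn => by
      rw [parabolicTerm_eq_integral hτ hA]
      exact norm_integral_le_integral_norm _

lemma tsum_parabolicTerm_eq_integral (hτ : 0 < τ.im) (hψ : ∀ a, ‖ψ a‖ ≤ 1)
    (hk : ContinuousOn k (Ici 1)) (hbound : ∀ t : ℝ, 1 ≤ t → ‖k t‖ ≤ C / t ^ 4) {A : ℝ}
    (hA : 0 < A) :
    ∑' mn, parabolicTerm τ ψ k A mn = ∫ u in Ioi 0, latticeZ τ ψ (2 * A ^ 2 * u) * k (1 + u) := by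
  have hc : 0 < 2 * A ^ 2 := by positivity
  simp_rw [parabolicTerm_eq_integral hτ hA, latticeZ_eq_tsum, ← tsum_mul_right]
  exact integral_tsum_of_summable_integral_norm (integrableOn_latticeZTerm_mul hk hbound hc)
    (summable_integral_norm_latticeZTerm_mul hτ hψ hbound hc)

end ParabolicTerm

lemma tendsto_setIntegral_comp_mul_atTop {Z g : ℝ → ℂ} {B : ℝ} {L : ℂ}
    (hZ : StronglyMeasurable Z) (hB : ∀ x, ‖Z x‖ ≤ B) (hL : Tendsto Z atTop (𝓝 L))
    (hg : IntegrableOn g (Ioi 0)) :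
    Tendsto (fun c => ∫ u in Ioi 0, Z (c * u) * g u) atTop (𝓝 (L * ∫ u in Ioi 0, g u)) := by
  rw [← integral_const_mul]
  refine tendsto_integral_filter_of_dominated_convergence (fun u => B * ‖g u‖)
    (.of_forall fun c => (hZ.comp_measurable (measurable_const_mul c)).aestronglyMeasurable.mul
      hg.aestronglyMeasurable)
    (.of_forall fun c => ae_of_all _ fun u => by
      rw [norm_mul]
      exact mul_le_mul_of_nonneg_right (hB _) (norm_nonneg _))
    (hg.norm.const_mul B) ?_
  filter_upwards [ae_restrict_mem measurableSet_Ioi] with u hu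
  exact (hL.comp (tendsto_id.atTop_mul_const hu)).mul_const _

theorem parabolic_sum_limit_general (τ : ℂ) (hτ : 0 < τ.im) (ψ : ℤ × ℤ → ℂ)
    (habs : ∀ a : ℤ × ℤ, ‖ψ a‖ = 1)
    (k : ℝ → ℂ) (C : ℝ) (hk : ContinuousOn k (Set.Ici 1))
    (hbound : ∀ t : ℝ, 1 ≤ t → ‖k t‖ ≤ C / t ^ 4) :
    (∀ A : ℝ, 0 < A → Summable (fun mn : ℤ × ℤ =>
      ‖if mn = 0 then 0 else
        ψ mn * ∫ r in Set.Ioc (0 : ℝ) A,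
          k (1 + ‖(mn.1 : ℂ) * τ + (mn.2 : ℂ)‖ ^ 2 / (2 * r ^ 2)) /
            ((r : ℂ) ^ 3)‖)) ∧
    ∀ L : ℂ, Filter.Tendsto (fun x : ℝ => latticeZ τ ψ x) Filter.atTop (nhds L) →
      Filter.Tendsto
        (fun A : ℝ => ∑' mn : ℤ × ℤ,
          if mn = 0 then 0 else
            ψ mn * ∫ r in Set.Ioc (0 : ℝ) A,
              k (1 + ‖(mn.1 : ℂ) * τ + (mn.2 : ℂ)‖ ^ 2 / (2 * r ^ 2)) /
                ((r : ℂ) ^ 3))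
        Filter.atTop (nhds (L * ∫ u in Set.Ioi (0 : ℝ), k (1 + u))) := by
  have hψ : ∀ a, ‖ψ a‖ ≤ 1 := fun a => (habs a).le
  refine ⟨fun A hA => summable_norm_parabolicTerm hτ hψ hbound hA, fun L hL => ?_⟩
  obtain ⟨B, hB⟩ := exists_norm_latticeZ_le hτ hψ hL
  have h2A : Tendsto (fun A : ℝ => 2 * A ^ 2) atTop atTop :=
    (tendsto_pow_atTop two_ne_zero).const_mul_atTop two_pos
  refine ((tendsto_setIntegral_comp_mul_atTop (stronglyMeasurable_latticeZ hτ hψ) hB hL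
    (integrableOn_Ioi_comp_one_add hk hbound)).comp h2A).congr' ?_
  filter_upwards [eventually_gt_atTop 0] with A hA
  exact (tsum_parabolicTerm_eq_integral hτ hψ hk hbound hA).symm

/-- for a nontrivial unitary character `ψ` of the lattice
`Λ = ℤ ⊕ ℤτ` (`Im τ > 0`) and a continuous `k` on `[1,∞)` with
`|k(t)| ≤ C t^{-4}`: for each `A > 0` the sum
`∑_{0 ≠ μ ∈ Λ} ψ(μ) ∫₀^A k(1+|μ|²/(2r²)) r^{-3} dr` converges absolutely, and
as `A → ∞` it tends to `L(Λ,ψ) ∫₀^∞ k(1+u) du`, where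
`L(Λ,ψ) = lim_{x→∞} Z(x,Λ,ψ)`. -/
theorem parabolic_sum_limit (τ : ℂ) (hτ : 0 < τ.im) (ψ : ℤ × ℤ → ℂ)
    (hadd : ∀ a b : ℤ × ℤ, ψ (a + b) = ψ a * ψ b)
    (habs : ∀ a : ℤ × ℤ, ‖ψ a‖ = 1)
    (hnt : ∃ a : ℤ × ℤ, ψ a ≠ 1)
    (k : ℝ → ℂ) (C : ℝ) (hk : ContinuousOn k (Set.Ici 1))
    (hbound : ∀ t : ℝ, 1 ≤ t → ‖k t‖ ≤ C / t ^ 4) :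
    (∀ A : ℝ, 0 < A → Summable (fun mn : ℤ × ℤ =>
      ‖if mn = 0 then 0 else
        ψ mn * ∫ r in Set.Ioc (0 : ℝ) A,
          k (1 + ‖(mn.1 : ℂ) * τ + (mn.2 : ℂ)‖ ^ 2 / (2 * r ^ 2)) /
            ((r : ℂ) ^ 3)‖)) ∧
    ∀ L : ℂ, Filter.Tendsto (fun x : ℝ => latticeZ τ ψ x) Filter.atTop (nhds L) →
      Filter.Tendsto
        (fun A : ℝ => ∑' mn : ℤ × ℤ,
          if mn = 0 then 0 else
            ψ mn * ∫ r in Set.Ioc (0 : ℝ) A,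
              k (1 + ‖(mn.1 : ℂ) * τ + (mn.2 : ℂ)‖ ^ 2 / (2 * r ^ 2)) /
                ((r : ℂ) ^ 3))
        Filter.atTop (nhds (L * ∫ u in Set.Ioi (0 : ℝ), k (1 + u))) :=
  parabolic_sum_limit_general τ hτ ψ habs k C hk hbound
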